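/- Let H be a history, S a partition state of H, ℓ a linearization of S, and o ∈ S the operation at which ℓ attains its maximum over S. Then S \ {o} is a partition state of H. -/

import Mathlib

structure Operation (M V : Type) where
  id : ℕ
  method : M
  value : V
  tinv : ℚ
  tres : ℚ
deriving DecidableEq

def WellFormed {M V : Type} (H : Finset (Operation M V)) : Prop :=
  ∀ o ∈ H, o.tinv < o.tres

def IsPartitionState {M V : Type} (H S : Finset (Operation M V)) : Prop :=
  S ⊆ H ∧ ∃ t : ℚ, ∀ o ∈ H, (o.tres < t → o ∈ S) ∧ (t < o.tinv → o ∉ S)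

def IsLinearization {M V : Type} (X : Finset (Operation M V)) (ℓ : Operation M V → ℚ) : Prop :=
  Set.InjOn ℓ ↑X ∧ ∀ o ∈ X, o.tinv < ℓ o ∧ ℓ o < o.tres

/- Take the new cut at `min t (ℓ o)`, where `t` is a cut for `S`. Every operation of `S` is
invoked before its linearization point, hence before `ℓ o`, so nothing of `S` starts after the
new cut; and `o` responds after `ℓ o`, so it is not forced into the state. -/

theorem IsPartitionState.erase_of_invoked_before {M V : Type} [DecidableEq M] [DecidableEq V]
    {H S : Finset (Operation M V)} (hS : IsPartitionState H S) {o : Operation M V} {s : ℚ}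
    (hres : s ≤ o.tres) (hinv : ∀ o' ∈ S, o'.tinv < s) :
    IsPartitionState H (S.erase o) := by
  obtain ⟨hsub, t, ht⟩ := hS
  refine ⟨(S.erase_subset o).trans hsub, min t s, fun o' ho' => ⟨fun hlt => ?_, fun hlt hmem => ?_⟩⟩
  · rw [lt_min_iff] at hlt
    refine Finset.mem_erase.mpr ⟨?_, (ht o' ho').1 hlt.1⟩
    rintro rfl
    exact (hlt.2.trans_le hres).false
  · have hmemS := Finset.mem_of_mem_erase hmem
    rcases min_lt_iff.mp hlt with h | h
    · exact (ht o' ho').2 h hmemS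
    · exact (h.trans (hinv o' hmemS)).false

theorem stmt3_general {M V : Type} [DecidableEq M] [DecidableEq V]
    (H : Finset (Operation M V))
    (S : Finset (Operation M V)) (hS : IsPartitionState H S)
    (ℓ : Operation M V → ℚ) (hℓ : IsLinearization S ℓ)
    (o : Operation M V) (ho : o ∈ S) (hmax : ∀ o' ∈ S, ℓ o' ≤ ℓ o) :
    IsPartitionState H (S.erase o) :=
  hS.erase_of_invoked_before (hℓ.2 o ho).2.le
    fun o' ho' => (hℓ.2 o' ho').1.trans_le (hmax o' ho')

theorem stmt3 {M V : Type} [DecidableEq M] [DecidableEq V]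
    (H : Finset (Operation M V)) (hwf : WellFormed H)
    (S : Finset (Operation M V)) (hS : IsPartitionState H S)
    (ℓ : Operation M V → ℚ) (hℓ : IsLinearization S ℓ)
    (o : Operation M V) (ho : o ∈ S) (hmax : ∀ o' ∈ S, ℓ o' ≤ ℓ o) :
    IsPartitionState H (S.erase o) :=
  stmt3_general H S hS ℓ hℓ o ho hmax
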